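/- arXiv:1812.02199 — 5 statements merged into one kernel-verified Lean document; each statement's English description precedes it below -/
import Mathlib

section
/- Let G be a non-abelian finitely generated group. Suppose that either G has no elements of order 4, or G has no non-trivial abelian characteristic subgroups. Then for every finite symmetric generating set S of G with 1 ∉ S, there exist two symmetric generating sets S̃ ⊆ T of G with 1 ∉ T, such that |S̃| = |S|, |T| ≤ 3|S|, and the triple (G, S̃, T) is strongly orientation-rigid. -/
open scoped Pointwise

universe u v

/-- The (right) Cayley graph of `G` with respect to `S`: vertices are the elements
of `G`, and `g`, `h` are adjacent iff `g⁻¹ * h ∈ S ∪ S⁻¹`. -/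
def cayleyGraph (G : Type u) [Group G] (S : Set G) : SimpleGraph G where
  Adj g h := g ≠ h ∧ g⁻¹ * h ∈ S ∪ S⁻¹
  symm := ⟨by
    rintro g h ⟨hne, hmem⟩
    refine ⟨hne.symm, ?_⟩
    have h1 : h⁻¹ * g = (g⁻¹ * h)⁻¹ := by group
    rw [h1]
    rcases hmem with hm | hm
    · exact Or.inr (Set.mem_inv.mpr (by simpa using hm))
    · exact Or.inl (Set.mem_inv.mp hm)⟩
  loopless := ⟨fun g hg => hg.1 rfl⟩

/-- A group is generalized dicyclic if it is non-abelian and has an abelian normal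
subgroup `A` of index 2 and an element `x` of order 4 not in `A` such that
`x * a * x⁻¹ = a⁻¹` for every `a ∈ A`. -/
def IsGeneralizedDicyclic (G : Type u) [Group G] : Prop :=
  (¬ ∀ a b : G, a * b = b * a) ∧
    ∃ (A : Subgroup G) (x : G), A.Normal ∧ (∀ a ∈ A, ∀ b ∈ A, a * b = b * a) ∧
      A.index = 2 ∧ orderOf x = 4 ∧ x ∉ A ∧ ∀ a ∈ A, x * a * x⁻¹ = a⁻¹

/-- A group is generalized dihedral if it is a semidirect product `A ⋊ Z/2Z` with `A`
abelian and `Z/2Z` acting by inversion; equivalently it has an abelian subgroup `A` of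
index 2 and an element `x ∉ A` with `x ^ 2 = 1` acting on `A` by inversion. -/
def IsGeneralizedDihedral (G : Type u) [Group G] : Prop :=
  ∃ A : Subgroup G, (∀ a ∈ A, ∀ b ∈ A, a * b = b * a) ∧ A.index = 2 ∧
    ∃ x : G, x ∉ A ∧ x ^ 2 = 1 ∧ ∀ a ∈ A, x * a * x⁻¹ = a⁻¹

section GroupDefs

variable {G : Type u} [Group G]

/-- The vertex set of the ball of radius 1 around `1` in the Cayley graph `Cay(G,S)`. -/
def ball1 (S : Set G) : Set G := insert (1 : G) (S ∪ S⁻¹)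

/-- A map `φ : G → G` is colour-preserving (for the colouring of `Cay(G,S)` by
unoriented labels) if `φ (g * s) ∈ {φ g * s, φ g * s⁻¹}` for all `g ∈ G`, `s ∈ S^±`. -/
def IsColourPreserving (S : Set G) (φ : G → G) : Prop :=
  ∀ g : G, ∀ s ∈ S ∪ S⁻¹, φ (g * s) = φ g * s ∨ φ (g * s) = φ g * s⁻¹

/-- A permutation of the vertices of a graph is an automorphism if it preserves
adjacency. -/
def IsGraphAuto {V : Type v} (Γ : SimpleGraph V) (φ : Equiv.Perm V) : Prop :=
  ∀ x y : V, Γ.Adj (φ x) (φ y) ↔ Γ.Adj x y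

/-- `Cay(G,S)` is a graphical regular representation: its only automorphisms are the
left multiplications by elements of `G`. -/
def IsGRR (S : Set G) : Prop :=
  ∀ φ : Equiv.Perm G, IsGraphAuto (cayleyGraph G S) φ → ∃ a : G, ∀ x : G, φ x = a * x

/-- The directed Cayley graph `Cay⃗(G,S)` is a digraphical regular representation: its
only automorphisms are the left multiplications by elements of `G`. -/
def IsDRR (S : Set G) : Prop :=
  ∀ φ : Equiv.Perm G, (∀ g h : G, (φ g)⁻¹ * φ h ∈ S ↔ g⁻¹ * h ∈ S) →
    ∃ a : G, ∀ x : G, φ x = a * x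

/-- The pair `(G,S)` is orientation-rigid if the group of colour-preserving
automorphisms of `Cay(G,S)` acts freely and transitively on the vertices. -/
def OrientationRigidPair (S : Set G) : Prop :=
  ∀ x y : G, ∃! φ : Equiv.Perm G, IsColourPreserving S ⇑φ ∧ φ x = y

/-- The pair `(G,S)` is colour-rigid if every automorphism of `Cay(G,S)` is
colour-preserving. -/
def ColourRigidPair (S : Set G) : Prop :=
  ∀ φ : Equiv.Perm G, IsGraphAuto (cayleyGraph G S) φ → IsColourPreserving S ⇑φ

/-- A colour-preserving automorphism of the ball of radius 1 around `1` in `Cay(G,T)`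
fixing the vertex `1`. -/
def BallColourAutoFixing (T : Set G) (φ : G → G) : Prop :=
  Set.BijOn φ (ball1 T) (ball1 T) ∧ φ 1 = 1 ∧
    ∀ g ∈ ball1 T, ∀ s ∈ T ∪ T⁻¹, g * s ∈ ball1 T →
      (φ (g * s) = φ g * s ∨ φ (g * s) = φ g * s⁻¹)

/-- An automorphism of the ball of radius 1 around `1` in `Cay(G,T)` (as induced
subgraph) fixing the vertex `1`. -/
def BallAutoFixing (T : Set G) (φ : G → G) : Prop :=
  Set.BijOn φ (ball1 T) (ball1 T) ∧ φ 1 = 1 ∧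
    ∀ g ∈ ball1 T, ∀ h ∈ ball1 T,
      ((cayleyGraph G T).Adj (φ g) (φ h) ↔ (cayleyGraph G T).Adj g h)

/-- `(G,S,T)` is a strongly orientation-rigid triple: every colour-preserving
automorphism of the ball of radius 1 of `Cay(G,T)` fixing `1` fixes the ball of
radius 1 of `Cay(G,S)` pointwise. -/
def StronglyOrientationRigid (S T : Set G) : Prop :=
  ∀ φ : G → G, BallColourAutoFixing T φ → ∀ x ∈ ball1 S, φ x = x

/-- `(G,S,T)` is a strongly colour-rigid triple: every automorphism of the ball of
radius 1 of `Cay(G,T)` fixing `1` acts by colour-preserving automorphisms on the ball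
of radius 1 of `Cay(G,S)`. -/
def StronglyColourRigid (S T : Set G) : Prop :=
  ∀ φ : G → G, BallAutoFixing T φ →
    ∀ g ∈ ball1 S, ∀ s ∈ S ∪ S⁻¹, g * s ∈ ball1 S →
      (φ (g * s) = φ g * s ∨ φ (g * s) = φ g * s⁻¹)

/-- `(G,S,T)` is a strong GRR triple: every automorphism of the ball of radius 1 of
`Cay(G,T)` fixing `1` fixes the ball of radius 1 of `Cay(G,S)` pointwise. -/
def StrongGRRTriple (S T : Set G) : Prop :=
  ∀ φ : G → G, BallAutoFixing T φ → ∀ x ∈ ball1 S, φ x = x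

/-- The number of triangles of `Cay(G,S)` containing the two vertices `1` and `s`. -/
noncomputable def triangleCount (S : Set G) (s : G) : ℕ :=
  Set.ncard {t : G | (cayleyGraph G S).Adj 1 s ∧ (cayleyGraph G S).Adj 1 t ∧
    (cayleyGraph G S).Adj t s}

/-- `S^{≤3}`: the set of non-identity elements of `G` which are products of at most 3
elements of `S^± = S ∪ S⁻¹`. -/
def wordLE3 (S : Set G) : Set G :=
  {g : G | g ≠ 1 ∧ ∃ l : List G, l.length ≤ 3 ∧ (∀ x ∈ l, x ∈ S ∪ S⁻¹) ∧ l.prod = g}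

/-- The group `𝓑(G,T)` of permutations `φ` of `T ∪ {1}` with `φ 1 = 1` and
`φ (s * t) ∈ {φ s * t, φ s * t⁻¹}` whenever `s ∈ T ∪ {1}`, `t ∈ T` and `s * t ∈ T`. -/
def MemBallPermGroup (T : Set G) (φ : G → G) : Prop :=
  Set.BijOn φ (insert (1 : G) T) (insert (1 : G) T) ∧ φ 1 = 1 ∧
    ∀ s ∈ insert (1 : G) T, ∀ t ∈ T, s * t ∈ T →
      (φ (s * t) = φ s * t ∨ φ (s * t) = φ s * t⁻¹)

end GroupDefs

/-- A covering of graphs: for every vertex `x`, the restriction of `f` to the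
neighbours of `x` is a bijection onto the neighbours of `f x`. -/
def IsGraphCovering {V : Type u} {W : Type v} (Γ : SimpleGraph V) (Δ : SimpleGraph W)
    (f : V → W) : Prop :=
  ∀ x : V, Set.BijOn f (Γ.neighborSet x) (Δ.neighborSet (f x))

/-- The restriction of `f` to the ball of radius 1 around `x` is an isomorphism onto
the ball of radius 1 around `f x`. -/
def BallIsoAt {V : Type u} {W : Type v} (Γ : SimpleGraph V) (Δ : SimpleGraph W)
    (f : V → W) (x : V) : Prop :=
  Set.BijOn f (insert x (Γ.neighborSet x)) (insert (f x) (Δ.neighborSet (f x))) ∧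
    ∀ y ∈ insert x (Γ.neighborSet x), ∀ z ∈ insert x (Γ.neighborSet x),
      (Γ.Adj y z ↔ Δ.Adj (f y) (f z))

/-- `ψ` is compatible with the labels of `Cay(G,S)`: two edges of `Cay(G,S)` with the
same image have the same (unoriented) label. -/
def CompatibleWithLabels {G : Type u} [Group G] {W : Type v} (S : Set G) (ψ : G → W) :
    Prop :=
  ∀ g h g' h' : G, (cayleyGraph G S).Adj g h → (cayleyGraph G S).Adj g' h' →
    ψ g = ψ g' → ψ h = ψ h' → (g⁻¹ * h = g'⁻¹ * h' ∨ g⁻¹ * h = h'⁻¹ * g')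

/-- The function `F(n) = 2(2n²+3n−2)²(2n²+4n−1)`. -/
def Ffun (n : ℕ) : ℕ := 2 * (2 * n ^ 2 + 3 * n - 2) ^ 2 * (2 * n ^ 2 + 4 * n - 1)

/-- The function `F̌(n) = 4(2n²+3n−2)²·n·(n+2)`. -/
def Fcheckfun (n : ℕ) : ℕ := 4 * (2 * n ^ 2 + 3 * n - 2) ^ 2 * n * (n + 2)

/-- A Tarski monster of exponent `p`: an infinite group all of whose non-trivial proper
subgroups are cyclic of order `p`. -/
def IsTarskiMonster (G : Type u) [Group G] (p : ℕ) : Prop :=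
  Infinite G ∧ ∀ H : Subgroup G, H ≠ ⊥ → H ≠ ⊤ → IsCyclic H ∧ Nat.card H = p

/-!
A colour-preserving automorphism `φ` of the ball of `Cay(G, T)` fixing `1` sends every
generator `x` to `x` or `x⁻¹`; so involutions are fixed, and fixing `s` also fixes `s⁻¹`.
If `s`, `p` and `s * p` all lie in `T`, the edge from `s` to `s * p` has colour `p`, so
`φ (s * p)` lies both in `{φ s * p, φ s * p⁻¹}` and in `{s * p, (s * p)⁻¹}`. When `φ s = s⁻¹`
this forces `s² = 1`, `s p s⁻¹ = p⁻¹`, `s² = p⁻²` or `s p = p s`, and the last case is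
harmless once `p` is known to be fixed. A non-central `s` of order `> 2` has a partner `p`
avoiding all four unless `s` has order 4 and central square, which the hypothesis excludes.
A central `s` uses `p = t^±` for one fixed `t` of order `> 2`: a non-central element of `S`,
or else a product of two non-commuting involutions of `S`. Adding `p^±` and `(s p)^±` for one
`s` out of each pair `{s, s⁻¹}` costs four elements per pair, which keeps `|T| ≤ 3|S|`.
-/

open Subgroup

section Forcing

variable {G : Type*} [Group G] {T : Set G} {φ : G → G} {a b s t x : G}

theorem sq_eq_one_iff_inv_eq : x ^ 2 = 1 ↔ x⁻¹ = x := by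
  rw [sq, mul_eq_one_iff_eq_inv, eq_comm]

theorem mem_ball1_of_mem (hx : x ∈ T ∪ T⁻¹) : x ∈ ball1 T := Set.mem_insert_of_mem _ hx

theorem stronglyOrientationRigid_iff {S : Set G} :
    StronglyOrientationRigid S T ↔
      ∀ φ : G → G, BallColourAutoFixing T φ → ∀ x ∈ S ∪ S⁻¹, φ x = x := by
  refine ⟨fun h φ hφ x hx => h φ hφ x (mem_ball1_of_mem hx), fun h φ hφ x hx => ?_⟩
  rcases hx with rfl | hx
  · exact hφ.2.1
  · exact h φ hφ x hx

namespace BallColourAutoFixing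

theorem apply_mul_eq_or (hφ : BallColourAutoFixing T φ) (hx : x ∈ ball1 T) (hs : s ∈ T ∪ T⁻¹)
    (hxs : x * s ∈ ball1 T) : φ (x * s) = φ x * s ∨ φ (x * s) = φ x * s⁻¹ :=
  hφ.2.2 x hx s hs hxs

theorem apply_eq_or_eq_inv (hφ : BallColourAutoFixing T φ) (hx : x ∈ T ∪ T⁻¹) :
    φ x = x ∨ φ x = x⁻¹ := by
  simpa [hφ.2.1] using hφ.apply_mul_eq_or (Set.mem_insert 1 _) hx
    (by simpa using mem_ball1_of_mem hx)

/-- Injectivity on the ball rules out `φ x⁻¹ = x = φ x` when `x ≠ x⁻¹`. -/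
theorem apply_inv (hφ : BallColourAutoFixing T φ) (hx : x ∈ T ∪ T⁻¹) (h : φ x = x) :
    φ x⁻¹ = x⁻¹ := by
  have hxi : x⁻¹ ∈ T ∪ T⁻¹ := by simpa [or_comm] using hx
  rcases hφ.apply_eq_or_eq_inv hxi with h' | h'
  · exact h'
  · rw [inv_inv] at h'
    have := hφ.1.injOn (mem_ball1_of_mem hxi) (mem_ball1_of_mem hx) (h'.trans h.symm)
    rw [this, h]

theorem apply_eq_of_sq_eq_one (hφ : BallColourAutoFixing T φ) (hx : x ∈ T ∪ T⁻¹)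
    (hx2 : x ^ 2 = 1) : φ x = x := by
  simpa [sq_eq_one_iff_inv_eq.mp hx2] using hφ.apply_eq_or_eq_inv hx

theorem apply_mul_eq_of_sq_eq_one (hφ : BallColourAutoFixing T φ) (ha : a ∈ ball1 T)
    (hb : b ∈ T ∪ T⁻¹) (hab : a * b ∈ ball1 T) (hφa : φ a = a) (hb2 : b ^ 2 = 1) :
    φ (a * b) = a * b := by
  simpa [sq_eq_one_iff_inv_eq.mp hb2, hφa] using hφ.apply_mul_eq_or ha hb hab

/-- If `φ s = s⁻¹`, then `φ (s * t)` lies in `{s⁻¹ * t, s⁻¹ * t⁻¹} ∩ {s * t, (s * t)⁻¹}` and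
each of the four coincidences contradicts a hypothesis; the last one, `Commute s t`, is
ruled out through the edge from `t` to `t * s = s * t` once `φ t = t`. -/
theorem apply_eq_of_triangle (hφ : BallColourAutoFixing T φ) (hs : s ∈ T ∪ T⁻¹)
    (ht : t ∈ T ∪ T⁻¹) (hst : s * t ∈ T ∪ T⁻¹) (hs2 : s ^ 2 ≠ 1)
    (hconj : s * t * s⁻¹ ≠ t⁻¹) (hsq : s ^ 2 ≠ (t ^ 2)⁻¹) (hφt : ¬Commute s t ∨ φ t = t) :
    φ s = s := by
  refine (hφ.apply_eq_or_eq_inv hs).resolve_right fun hφs => ?_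
  have h1 := hφ.apply_mul_eq_or (mem_ball1_of_mem hs) ht (mem_ball1_of_mem hst)
  rw [hφs] at h1
  rcases hφ.apply_eq_or_eq_inv hst with h2 | h2 <;> rw [h2] at h1 <;> rcases h1 with h1 | h1
  · have := congrArg (s * · * t⁻¹) h1
    group at this
    exact hs2 (by simpa [sq] using this)
  · have := congrArg (s * · * t⁻¹) h1
    group at this
    exact hsq (by simpa [sq] using this)
  · have := congrArg (fun z => (s * z)⁻¹) h1
    group at this
    exact hconj (by group; exact this)
  · have hc : Commute s t := by simpa [commute_iff_eq, eq_comm] using congrArg (·⁻¹) h1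
    have h3 := hφ.apply_mul_eq_or (mem_ball1_of_mem ht) hs (hc.eq ▸ mem_ball1_of_mem hst)
    rw [← hc.eq, h2, hφt.resolve_left (not_not.2 hc)] at h3
    rcases h3 with h3 | h3
    · rw [inv_eq_iff_mul_eq_one, ← hc.eq, ← sq, hc.mul_pow, ← eq_inv_iff_mul_eq_one] at h3
      exact hsq h3
    · rw [hc.eq, mul_inv_rev, hc.inv_inv.eq, mul_left_inj] at h3
      exact hconj (by rw [hc.eq, mul_inv_cancel_right, h3])

end BallColourAutoFixing

end Forcing

section Partner

variable {G : Type*} [Group G] {s t u x : G}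

theorem orderOf_eq_four (h2 : x ^ 2 ≠ 1) (h4 : x ^ 4 = 1) : orderOf x = 4 :=
  orderOf_eq_prime_pow (p := 2) (n := 1) (by simpa using h2) (by simpa using h4)

theorem sq_notMem_center_of_orderOf_eq_four
    (hyp : (∀ g : G, orderOf g ≠ 4) ∨
      (∀ H : Subgroup G, H.Characteristic → (∀ a ∈ H, ∀ b ∈ H, a * b = b * a) → H = ⊥))
    (hx : orderOf x = 4) : x ^ 2 ∉ center G := by
  rcases hyp with h4 | hchar
  · exact absurd hx (h4 x)
  · rw [hchar _ inferInstance fun a _ b hb => mem_center_iff.mp hb a, mem_bot]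
    intro h
    have := orderOf_dvd_of_pow_eq_one h
    rw [hx] at this
    norm_num at this

theorem pow_four_eq_one_of_sq_eq_inv (h : s ^ 2 = (s ^ 2)⁻¹) : s ^ 4 = 1 := by
  rw [show s ^ 4 = s ^ 2 * s ^ 2 by group]
  exact mul_eq_one_iff_eq_inv.mpr h

theorem conj_mul_eq_inv_iff : s * (s * u) * s⁻¹ = (s * u)⁻¹ ↔ s ^ 2 = (u ^ 2)⁻¹ := by
  rw [mul_inv_eq_iff_eq_mul, mul_inv_rev, inv_mul_cancel_right, eq_inv_iff_mul_eq_one,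
    eq_inv_iff_mul_eq_one, sq, sq]
  simp only [mul_assoc]

theorem pow_four_eq_one_of_conj_eq_inv (hA : s * u * s⁻¹ = u⁻¹)
    (hB : s ^ 2 = (u ^ 2)⁻¹ ∨ s ^ 2 = ((s * u) ^ 2)⁻¹) : s ^ 4 = 1 := by
  apply pow_four_eq_one_of_sq_eq_inv
  rcases hB with hB | hB
  · have h1 : s * u ^ 2 * s⁻¹ = (u ^ 2)⁻¹ := by rw [← conj_pow, hA, inv_pow]
    rw [← hB, inv_eq_iff_eq_inv.mp hB.symm] at h1
    nth_rw 1 [← h1]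
    simp only [sq]
    group
  · have hsq : (s * u) ^ 2 = s ^ 2 := by
      calc (s * u) ^ 2 = s * (u⁻¹)⁻¹ * s * u := by simp only [sq, inv_inv, mul_assoc]
        _ = s * (s * u * s⁻¹)⁻¹ * s * u := by rw [hA]
        _ = s ^ 2 := by simp only [sq]; group
    rwa [hsq] at hB

theorem sq_mem_center_of_forall
    (h : ∀ u, ¬Commute s u → s * u * s⁻¹ = u⁻¹ ∨ s ^ 2 = (u ^ 2)⁻¹) : s ^ 2 ∈ center G := by
  refine mem_center_iff.mpr fun u => ?_
  by_cases hsu : Commute s u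
  · exact (hsu.pow_left 2).eq.symm
  rcases h u hsu with hA | hB
  · refine (mul_inv_eq_iff_eq_mul.mp ?_).symm
    rw [show s ^ 2 * u * (s ^ 2)⁻¹ = s * (s * u * s⁻¹) * s⁻¹ by simp only [sq]; group, hA,
      ← conj_inv, hA, inv_inv]
  · rw [hB]
    exact ((Commute.self_pow u 2).inv_right).eq

theorem exists_partner_of_notMem_center (hG : ∀ x : G, orderOf x = 4 → x ^ 2 ∉ center G)
    (hs2 : s ^ 2 ≠ 1) (hs : s ∉ center G) :
    ∃ p, ¬Commute s p ∧ s * p * s⁻¹ ≠ p⁻¹ ∧ s ^ 2 ≠ (p ^ 2)⁻¹ := by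
  -- Otherwise `s` would have order 4 and central square.
  by_contra! h
  replace h : ∀ u, ¬Commute s u → s * u * s⁻¹ = u⁻¹ ∨ s ^ 2 = (u ^ 2)⁻¹ :=
    fun u hu => or_iff_not_imp_left.mpr (h u hu)
  have hmul : ∀ u, ¬Commute s u → ¬Commute s (s * u) := fun u hu hsu =>
    hu ((IsLeftRegular.all s).commute_mul_left_iff.mp hsu.symm)
  have hB : ∀ u, ¬Commute s u → s ^ 2 = (u ^ 2)⁻¹ ∨ s ^ 2 = ((s * u) ^ 2)⁻¹ := fun u hu =>
    ((h _ (hmul u hu)).imp_left conj_mul_eq_inv_iff.mp)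
  obtain ⟨u, hu⟩ : ∃ u, ¬Commute s u := by
    simpa [mem_center_iff, commute_iff_eq, eq_comm] using hs
  have hs4 : s ^ 4 = 1 := by
    rcases h u hu with hA | hBu
    · exact pow_four_eq_one_of_conj_eq_inv hA (hB u hu)
    · exact pow_four_eq_one_of_conj_eq_inv (conj_mul_eq_inv_iff.mpr hBu) (hB _ (hmul u hu))
  exact hG s (orderOf_eq_four hs2 hs4) (sq_mem_center_of_forall h)

theorem exists_partner_of_mem_center (hG : ∀ x : G, orderOf x = 4 → x ^ 2 ∉ center G)
    (hs : s ∈ center G) (ht : t ^ 2 ≠ 1) :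
    ∃ p, (p = t ∨ p = t⁻¹) ∧ s * p * s⁻¹ ≠ p⁻¹ ∧ s ^ 2 ≠ (p ^ 2)⁻¹ := by
  have hconj : ∀ p : G, p ^ 2 ≠ 1 → s * p * s⁻¹ ≠ p⁻¹ := fun p hp h => by
    rw [← (mem_center_iff.mp hs p), mul_inv_cancel_right, ← mul_eq_one_iff_eq_inv, ← sq] at h
    exact hp h
  by_cases hB : s ^ 2 = (t ^ 2)⁻¹
  · refine ⟨t⁻¹, Or.inr rfl, hconj _ (by rwa [inv_pow, inv_ne_one]), fun h => ?_⟩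
    rw [inv_pow, inv_inv] at h
    have ht4 : t ^ 4 = 1 := pow_four_eq_one_of_sq_eq_inv (h ▸ hB)
    exact hG t (orderOf_eq_four ht ht4) (h ▸ pow_mem hs 2)
  · exact ⟨t, Or.inl rfl, hconj t ht, hB⟩

/-- `p` lets the triangle `1, s, s * p` pin down `s` (see `apply_eq_of_triangle`); for central
`s` this relies on the anchor `t` being fixed already. -/
structure IsPartner (t s p : G) : Prop where
  conj_ne_inv : s * p * s⁻¹ ≠ p⁻¹
  sq_ne_inv_sq : s ^ 2 ≠ (p ^ 2)⁻¹
  not_commute : s ∉ center G → ¬Commute s p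
  eq_of_mem_center : s ∈ center G → p = t ∨ p = t⁻¹

theorem IsPartner.ne_one {p : G} (h : IsPartner t s p) : p ≠ 1 := by
  rintro rfl
  exact h.conj_ne_inv (by simp)

theorem IsPartner.mul_ne_one {p : G} (h : IsPartner t s p) : s * p ≠ 1 := by
  intro hsp
  rw [mul_eq_one_iff_eq_inv] at hsp
  exact h.sq_ne_inv_sq (by rw [hsp, inv_pow])

theorem exists_isPartner (hG : ∀ x : G, orderOf x = 4 → x ^ 2 ∉ center G) (ht : t ^ 2 ≠ 1)
    (hs : s ^ 2 ≠ 1) : ∃ p, IsPartner t s p := by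
  by_cases hsc : s ∈ center G
  · obtain ⟨p, hpt, hconj, hsq⟩ := exists_partner_of_mem_center hG hsc ht
    exact ⟨p, hconj, hsq, fun h => absurd hsc h, fun _ => hpt⟩
  · obtain ⟨p, hcomm, hconj, hsq⟩ := exists_partner_of_notMem_center hG hs hsc
    exact ⟨p, hconj, hsq, fun _ => hcomm, fun h => absurd h hsc⟩

end Partner

section Representatives

open Finset

variable {G : Type*} [Group G] {r : G → G → Prop} [IsStrictTotalOrder G r] [DecidableRel r]
  {S : Finset G}

theorem sq_ne_one_of_mem_filter_rel_inv {s : G} (hs : s ∈ {x ∈ S | r x x⁻¹}) : s ^ 2 ≠ 1 := by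
  intro hs2
  have hr := (mem_filter.mp hs).2
  rw [sq_eq_one_iff_inv_eq.mp hs2] at hr
  exact Std.Irrefl.irrefl s hr

variable [DecidableEq G]

theorem card_filter_rel_inv (hS : S⁻¹ = S) :
    2 * #{x ∈ S | r x x⁻¹} + #{x ∈ S | x ^ 2 = 1} = #S := by
  have hinv : #{x ∈ S | r x⁻¹ x} = #{x ∈ S | r x x⁻¹} := by
    rw [← card_inv, inv_filter, hS]
    simp only [inv_inv]
  have hnot : {x ∈ S | ¬r x x⁻¹} = {x ∈ S | r x⁻¹ x} ∪ {x ∈ S | x ^ 2 = 1} := by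
    ext x
    simp only [mem_union, mem_filter, sq_eq_one_iff_inv_eq, ← and_or_left]
    refine and_congr_right fun _ => ⟨fun h => ?_, ?_⟩
    · rcases Std.Trichotomous.rel_or_eq_or_rel_swap (r := r) (a := x) (b := x⁻¹) with h' | h' | h'
      exacts [absurd h' h, Or.inr h'.symm, Or.inl h']
    · rintro (h | h)
      · exact Std.Asymm.asymm _ _ h
      · rw [h]
        exact Std.Irrefl.irrefl x
  have hdisj : Disjoint {x ∈ S | r x⁻¹ x} {x ∈ S | x ^ 2 = 1} := by
    refine disjoint_filter.mpr fun x _ h hx => ?_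
    rw [sq_eq_one_iff_inv_eq] at hx
    exact Std.Irrefl.irrefl x (hx ▸ h)
  rw [← card_filter_add_card_filter_not (s := S) (fun x => r x x⁻¹), hnot,
    card_union_of_disjoint hdisj, hinv]
  ring

theorem mem_or_inv_mem_filter_rel_inv (hS : S⁻¹ = S) {x : G} (hx : x ∈ S) (hx2 : x ^ 2 ≠ 1) :
    x ∈ {x ∈ S | r x x⁻¹} ∨ x⁻¹ ∈ {x ∈ S | r x x⁻¹} := by
  rcases Std.Trichotomous.rel_or_eq_or_rel_swap (r := r) (a := x) (b := x⁻¹) with h | h | h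
  · exact Or.inl (mem_filter.mpr ⟨hx, h⟩)
  · exact absurd (sq_eq_one_iff_inv_eq.mpr h.symm) hx2
  · exact Or.inr (mem_filter.mpr ⟨hS ▸ inv_mem_inv hx, by rwa [inv_inv]⟩)

end Representatives

section Extension

open Finset

variable {G : Type*} [Group G] [DecidableEq G] {S R : Finset G} {s t x : G} {p : G → G}
  {φ : G → G}

/-- For `s ∈ R` this adds `p s` and `s * p s` (and inverses), completing the triangle
`1, s, s * p s`; `t` is the anchor used by central elements. -/
def rigidExtension (S : Finset G) (t : G) (R : Finset G) (p : G → G) : Finset G :=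
  S ∪ {t, t⁻¹} ∪ R.biUnion fun s => {p s, (p s)⁻¹, s * p s, (s * p s)⁻¹}

theorem union_pair_subset_rigidExtension : S ∪ {t, t⁻¹} ⊆ rigidExtension S t R p :=
  subset_union_left

theorem partner_mem_rigidExtension (hs : s ∈ R) :
    p s ∈ rigidExtension S t R p ∧ s * p s ∈ rigidExtension S t R p := by
  constructor <;> exact mem_union_right _ (mem_biUnion.mpr ⟨s, hs, by simp⟩)

theorem inv_rigidExtension (hS : S⁻¹ = S) :
    (rigidExtension S t R p)⁻¹ = rigidExtension S t R p := by
  ext x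
  simp only [rigidExtension, mem_inv', mem_union, mem_biUnion, mem_insert, mem_singleton,
    inv_eq_iff_eq_inv, inv_inv, ← mem_inv' (s := S), hS]
  aesop

theorem one_notMem_rigidExtension (h1S : (1 : G) ∉ S) (ht : t ≠ 1)
    (hp : ∀ s ∈ R, p s ≠ 1 ∧ s * p s ≠ 1) : (1 : G) ∉ rigidExtension S t R p := by
  simp only [rigidExtension, mem_union, mem_biUnion, mem_insert, mem_singleton, not_or,
    not_exists, not_and, eq_comm (a := (1 : G)), inv_eq_one]
  exact ⟨⟨h1S, ht, ht⟩, fun s hs => ⟨(hp s hs).1, (hp s hs).1, (hp s hs).2, (hp s hs).2⟩⟩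

theorem card_rigidExtension_le : #(rigidExtension S t R p) ≤ #(S ∪ {t, t⁻¹}) + 4 * #R := by
  refine (card_union_le _ _).trans (Nat.add_le_add_left ?_ _)
  calc #(R.biUnion fun s => {p s, (p s)⁻¹, s * p s, (s * p s)⁻¹})
      ≤ ∑ s ∈ R, #{p s, (p s)⁻¹, s * p s, (s * p s)⁻¹} := card_biUnion_le
    _ ≤ ∑ _s ∈ R, 4 := sum_le_sum fun _ _ => card_le_four
    _ = 4 * #R := by rw [sum_const, smul_eq_mul, mul_comm]

theorem BallColourAutoFixing.apply_eq_of_mem_rigidExtension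
    (hφ : BallColourAutoFixing (rigidExtension S t R p : Set G) φ) (hRS : R ⊆ S)
    (hR : ∀ x ∈ S, x ^ 2 ≠ 1 → x ∈ R ∨ x⁻¹ ∈ R) (hRsq : ∀ s ∈ R, s ^ 2 ≠ 1)
    (hp : ∀ s ∈ R, IsPartner t s (p s)) (hx : x ∈ S) (hxt : x ∉ center G ∨ φ t = t) :
    φ x = x := by
  set T := rigidExtension S t R p
  have hT : ∀ {y}, y ∈ T → y ∈ (T : Set G) ∪ (T : Set G)⁻¹ := fun hy => Or.inl hy
  have hST : ∀ {y}, y ∈ S → y ∈ T := fun hy =>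
    union_pair_subset_rigidExtension (mem_union_left _ hy)
  have hrep : ∀ s ∈ R, (s ∉ center G ∨ φ t = t) → φ s = s := by
    intro s hs hst
    obtain ⟨hpT, hspT⟩ := partner_mem_rigidExtension (S := S) (t := t) (p := p) hs
    have hps := hp s hs
    refine hφ.apply_eq_of_triangle (hT (hST (hRS hs))) (hT hpT) (hT hspT) (hRsq s hs)
      hps.conj_ne_inv hps.sq_ne_inv_sq ?_
    by_cases hsc : s ∈ center G
    · have hφt := hst.resolve_left (not_not.2 hsc)
      have htT : t ∈ T := union_pair_subset_rigidExtension (by simp)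
      rcases hps.eq_of_mem_center hsc with h | h <;> rw [h]
      · exact Or.inr hφt
      · exact Or.inr (hφ.apply_inv (hT htT) hφt)
    · exact Or.inl (hps.not_commute hsc)
  by_cases hx2 : x ^ 2 = 1
  · exact hφ.apply_eq_of_sq_eq_one (hT (hST hx)) hx2
  rcases hR x hx hx2 with hxR | hxR
  · exact hrep x hxR hxt
  · have hφx := hrep x⁻¹ hxR (hxt.imp_left fun h h' => h (by simpa using inv_mem h'))
    simpa using hφ.apply_inv (hT (hST (hRS hxR))) hφx

theorem stronglyOrientationRigid_rigidExtension (hS : (S : Set G)⁻¹ = S) (hRS : R ⊆ S)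
    (hR : ∀ x ∈ S, x ^ 2 ≠ 1 → x ∈ R ∨ x⁻¹ ∈ R) (hRsq : ∀ s ∈ R, s ^ 2 ≠ 1)
    (hp : ∀ s ∈ R, IsPartner t s (p s))
    (ht : (t ∈ S ∧ t ∉ center G) ∨ ∃ a ∈ S, ∃ b ∈ S, a ^ 2 = 1 ∧ b ^ 2 = 1 ∧ t = a * b) :
    StronglyOrientationRigid (S : Set G) (rigidExtension S t R p : Set G) := by
  refine stronglyOrientationRigid_iff.mpr fun φ hφ x hx => ?_
  rw [hS, Set.union_self] at hx
  have hφS : ∀ y ∈ S, y ∉ center G ∨ φ t = t → φ y = y := fun y =>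
    hφ.apply_eq_of_mem_rigidExtension hRS hR hRsq hp
  have hφt : φ t = t := by
    rcases ht with ⟨htS, htc⟩ | ⟨a, ha, b, hb, ha2, hb2, rfl⟩
    · exact hφS t htS (Or.inl htc)
    · have hT : ∀ {y}, y ∈ S ∪ {a * b, (a * b)⁻¹} →
          y ∈ (rigidExtension S (a * b) R p : Set G) ∪ (rigidExtension S (a * b) R p : Set G)⁻¹ :=
        fun hy => Or.inl (union_pair_subset_rigidExtension hy)
      have haT := hT (mem_union_left _ ha)
      exact hφ.apply_mul_eq_of_sq_eq_one (mem_ball1_of_mem haT) (hT (mem_union_left _ hb))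
        (mem_ball1_of_mem (hT (mem_union_right _ (mem_insert_self _ _))))
        (hφ.apply_eq_of_sq_eq_one haT ha2) hb2
  exact hφS x hx (Or.inr hφt)

end Extension

section Construction

open Finset

variable {G : Type*} [Group G] {a b : G}

theorem exists_not_commute_of_closure_eq_top {S : Set G} (hS : closure S = ⊤)
    (hG : ¬∀ a b : G, a * b = b * a) : ∃ a ∈ S, ∃ b ∈ S, ¬Commute a b := by
  by_contra! h
  have hcomm := isMulCommutative_closure fun a ha b hb => (h a ha b hb).eq
  rw [hS] at hcomm
  exact hG fun a b => congrArg Subtype.val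
    (isMulCommutative_iff.mp hcomm ⟨a, mem_top a⟩ ⟨b, mem_top b⟩)

theorem notMem_center_of_not_commute (hab : ¬Commute a b) : a ∉ center G :=
  fun ha => hab (mem_center_iff.mp ha b).symm

theorem exists_anchor {S : Set G} (ha : a ∈ S) (hb : b ∈ S) (hab : ¬Commute a b) :
    ∃ t, t ^ 2 ≠ 1 ∧
      ((t ∈ S ∧ t ∉ center G) ∨ ∃ a ∈ S, ∃ b ∈ S, a ^ 2 = 1 ∧ b ^ 2 = 1 ∧ t = a * b) := by
  by_cases ha2 : a ^ 2 = 1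
  · by_cases hb2 : b ^ 2 = 1
    · refine ⟨a * b, fun habsq => hab ?_, Or.inr ⟨a, ha, b, hb, ha2, hb2, rfl⟩⟩
      rw [sq_eq_one_iff_inv_eq, mul_inv_rev, sq_eq_one_iff_inv_eq.mp ha2,
        sq_eq_one_iff_inv_eq.mp hb2] at habsq
      exact habsq.symm
    · exact ⟨b, hb2, Or.inl ⟨hb, notMem_center_of_not_commute fun h => hab h.symm⟩⟩
  · exact ⟨a, ha2, Or.inl ⟨ha, notMem_center_of_not_commute hab⟩⟩

theorem card_union_pair_le [DecidableEq G] {S : Finset G} (hS : S⁻¹ = S) {t : G}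
    (ht : t ∈ S ∨ ∃ a ∈ S, a ^ 2 = 1) : #(S ∪ {t, t⁻¹}) ≤ #S + 2 * #{x ∈ S | x ^ 2 = 1} := by
  rcases ht with htS | ⟨a, ha, ha2⟩
  · rw [union_eq_left.mpr (insert_subset htS (singleton_subset_iff.mpr (hS ▸ inv_mem_inv htS)))]
    omega
  · have hinvol : 0 < #{x ∈ S | x ^ 2 = 1} := card_pos.mpr ⟨a, mem_filter.mpr ⟨ha, ha2⟩⟩
    have := (card_union_le S {t, t⁻¹}).trans (Nat.add_le_add_left card_le_two _)
    omega

theorem exists_rigid_superset (hG : ∀ x : G, orderOf x = 4 → x ^ 2 ∉ center G) {S : Finset G}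
    (h1S : (1 : G) ∉ S) (hS : (S : Set G)⁻¹ = S) (ha : a ∈ S) (hb : b ∈ S)
    (hab : ¬Commute a b) :
    ∃ T : Finset G, S ⊆ T ∧ (1 : G) ∉ T ∧ (T : Set G)⁻¹ = T ∧ #T ≤ 3 * #S ∧
      StronglyOrientationRigid (S : Set G) (T : Set G) := by
  classical
  obtain ⟨t, ht2, htS⟩ := exists_anchor (S := (S : Set G)) ha hb hab
  have hS' : S⁻¹ = S := by exact_mod_cast hS
  -- one representative out of each pair `{x, x⁻¹}` of non-involutions of `S`
  set R := {x ∈ S | WellOrderingRel x x⁻¹}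
  have hRsq : ∀ s ∈ R, s ^ 2 ≠ 1 := fun _ => sq_ne_one_of_mem_filter_rel_inv (r := WellOrderingRel)
  have hpex : ∀ s : G, ∃ p, s ^ 2 ≠ 1 → IsPartner t s p := fun s => by
    by_cases hs : s ^ 2 = 1
    exacts [⟨1, fun h => absurd hs h⟩, (exists_isPartner hG ht2 hs).imp fun _ h _ => h]
  choose p hp using hpex
  have hpR : ∀ s ∈ R, IsPartner t s (p s) := fun s hs => hp s (hRsq s hs)
  refine ⟨rigidExtension S t R p, subset_union_left.trans union_pair_subset_rigidExtension,
    ?_, ?_, ?_, stronglyOrientationRigid_rigidExtension hS (filter_subset _ _)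
      (fun _ => mem_or_inv_mem_filter_rel_inv (r := WellOrderingRel) hS') hRsq hpR htS⟩
  · exact one_notMem_rigidExtension h1S (fun h => ht2 (by simp [h]))
      fun s hs => ⟨(hpR s hs).ne_one, (hpR s hs).mul_ne_one⟩
  · rw [← Finset.coe_inv, inv_rigidExtension hS']
  · -- The anchor adds two elements only when it is a product of involutions of `S`, and the
    -- budget `3|S| - |S| - 4|R|` is twice the number of involutions.
    have hRcard : 2 * #R + #{x ∈ S | x ^ 2 = 1} = #S :=
      card_filter_rel_inv (r := WellOrderingRel) hS'
    have hpair := card_union_pair_le hS' (htS.imp (·.1) fun ⟨a, ha, _, _, ha2, _⟩ => ⟨a, ha, ha2⟩)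
    have hTcard := card_rigidExtension_le (S := S) (t := t) (R := R) (p := p)
    omega

end Construction

theorem better_bounds_orientation_rigid_general {G : Type u} [Group G]
    (hab : ¬ ∀ a b : G, a * b = b * a)
    (hyp : (∀ g : G, orderOf g ≠ 4) ∨
      (∀ H : Subgroup G, H.Characteristic → (∀ a ∈ H, ∀ b ∈ H, a * b = b * a) → H = ⊥))
    (S : Finset G) (h1S : (1 : G) ∉ S) (hSsym : (S : Set G)⁻¹ = (S : Set G))
    (hSgen : Subgroup.closure (S : Set G) = ⊤) :
    ∃ St T : Finset G, St ⊆ T ∧ (1 : G) ∉ T ∧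
      (St : Set G)⁻¹ = (St : Set G) ∧ (T : Set G)⁻¹ = (T : Set G) ∧
      Subgroup.closure (St : Set G) = ⊤ ∧ Subgroup.closure (T : Set G) = ⊤ ∧
      St.card = S.card ∧ T.card ≤ 3 * S.card ∧
      StronglyOrientationRigid (St : Set G) (T : Set G) := by
  obtain ⟨a, ha, b, hb, hab⟩ := exists_not_commute_of_closure_eq_top hSgen hab
  obtain ⟨T, hST, h1T, hTsym, hcard, hrigid⟩ :=
    exists_rigid_superset (fun x => sq_notMem_center_of_orderOf_eq_four hyp) h1S hSsym ha hb hab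
  refine ⟨S, T, hST, h1T, hSsym, hTsym, hSgen, ?_, rfl, hcard, hrigid⟩
  exact top_le_iff.mp (hSgen ▸ closure_mono (by exact_mod_cast hST))

/-- **Proposition (better bounds).** Let `G` be a non-abelian finitely generated group
with no elements of order 4, or with no non-trivial abelian characteristic subgroups.
Then for every finite symmetric generating set `S` there are symmetric generating sets
`S̃ ⊆ T` with `|S̃| = |S|`, `|T| ≤ 3|S|` and `(G, S̃, T)` strongly orientation-rigid. -/
theorem better_bounds_orientation_rigid {G : Type u} [Group G] [Group.FG G]
    (hab : ¬ ∀ a b : G, a * b = b * a)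
    (hyp : (∀ g : G, orderOf g ≠ 4) ∨
      (∀ H : Subgroup G, H.Characteristic → (∀ a ∈ H, ∀ b ∈ H, a * b = b * a) → H = ⊥))
    (S : Finset G) (h1S : (1 : G) ∉ S) (hSsym : (S : Set G)⁻¹ = (S : Set G))
    (hSgen : Subgroup.closure (S : Set G) = ⊤) :
    ∃ St T : Finset G, St ⊆ T ∧ (1 : G) ∉ T ∧
      (St : Set G)⁻¹ = (St : Set G) ∧ (T : Set G)⁻¹ = (T : Set G) ∧
      Subgroup.closure (St : Set G) = ⊤ ∧ Subgroup.closure (T : Set G) = ⊤ ∧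
      St.card = S.card ∧ T.card ≤ 3 * S.card ∧
      StronglyOrientationRigid (St : Set G) (T : Set G) :=
  better_bounds_orientation_rigid_general hab hyp S h1S hSsym hSgen
end

section
/- Let (G,S,T) be a strong GRR triple. Then for any covering ψ: Cay(G,T) → Δ whose restrictions to balls of radius 1 are isomorphisms, there exists a subgraph Δ̃ of Δ such that the restriction of ψ to Cay(G,S) is a covering onto Δ̃ which is compatible with the labels of Cay(G,S). Moreover, Δ̃ is globally invariant under the action of the automorphism group of Δ. -/
open scoped Pointwise

universe u v

/-!
Left translation identifies every ball of radius 1 of `Cay(G,T)` with the ball around `1`, and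
`ψ` identifies it with a ball of `Δ`. Hence an automorphism `φ` of `Δ` with `φ (ψ g') = ψ g`
induces an automorphism of the ball around `1` fixing `1`, which by the strong GRR property fixes
the ball of `Cay(G,S)`; that is, `φ (ψ (g' * x)) = ψ (g * x)` for `x ∈ S^±`. Taking for `Δ'` the
union of the images of `ψ(Cay(G,S))` under `Aut Δ`, invariance is automatic, and this identity
shows that `ψ` maps the `S`-neighbours of `g` bijectively onto the `Δ'`-neighbours of `ψ g`,
with matching labels.
-/

namespace SimpleGraph

variable {V : Type u} {W : Type v} {Γ : SimpleGraph V} {Δ : SimpleGraph W}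

theorem Iso.bijOn_insert_neighborSet (φ : Γ ≃g Δ) (x : V) :
    Set.BijOn φ (insert x (Γ.neighborSet x)) (insert (φ x) (Δ.neighborSet (φ x))) := by
  simpa only [Set.image_insert_eq, Iso.image_neighborSet] using
    (φ.injective.injOn (s := insert x (Γ.neighborSet x))).bijOn_image

def Hom.autSaturation (f : Γ →g Δ) : SimpleGraph W where
  Adj x y := ∃ φ : Δ ≃g Δ, ∃ g h, Γ.Adj g h ∧ φ (f g) = x ∧ φ (f h) = y
  symm := ⟨fun _ _ ⟨φ, g, h, hgh, hx, hy⟩ => ⟨φ, h, g, hgh.symm, hy, hx⟩⟩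
  loopless := ⟨fun _ ⟨φ, _, _, hgh, hx, hy⟩ =>
    (φ.map_adj_iff.2 (f.map_adj hgh)).ne (hx.trans hy.symm)⟩

variable (f : Γ →g Δ)

theorem Hom.autSaturation_le : f.autSaturation ≤ Δ := by
  rintro _ _ ⟨φ, g, h, hgh, rfl, rfl⟩
  exact φ.map_adj_iff.2 (f.map_adj hgh)

theorem Hom.adj_autSaturation {g h : V} (hgh : Γ.Adj g h) : f.autSaturation.Adj (f g) (f h) :=
  ⟨RelIso.refl _, g, h, hgh, rfl, rfl⟩

theorem Hom.autSaturation_adj_iso_iff (φ : Δ ≃g Δ) {x y : W} :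
    f.autSaturation.Adj (φ x) (φ y) ↔ f.autSaturation.Adj x y := by
  constructor
  · rintro ⟨φ₀, g, h, hgh, hx, hy⟩
    refine ⟨φ₀.trans φ.symm, g, h, hgh, ?_, ?_⟩ <;> simp [hx, hy]
  · rintro ⟨φ₀, g, h, hgh, rfl, rfl⟩
    exact ⟨φ₀.trans φ, g, h, hgh, rfl, rfl⟩

end SimpleGraph

section Cayley

variable {G : Type u} [Group G] {S T : Set G}

theorem cayleyGraph_mono (hST : S ⊆ T) : cayleyGraph G S ≤ cayleyGraph G T :=
  fun _ _ ⟨hne, hmem⟩ => ⟨hne, Set.union_subset_union hST (Set.inv_subset_inv.2 hST) hmem⟩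

theorem ball1_mono (hST : S ⊆ T) : ball1 S ⊆ ball1 T :=
  Set.insert_subset_insert (Set.union_subset_union hST (Set.inv_subset_inv.2 hST))

theorem cayleyGraph_adj_mul_left (a g h : G) :
    (cayleyGraph G T).Adj (a * g) (a * h) ↔ (cayleyGraph G T).Adj g h := by
  simp only [cayleyGraph, mul_inv_rev, ne_eq, mul_right_inj, mul_assoc, inv_mul_cancel_left]

theorem mem_insert_neighborSet_cayleyGraph {g h : G} :
    h ∈ insert g ((cayleyGraph G T).neighborSet g) ↔ g⁻¹ * h ∈ ball1 T := by
  rcases eq_or_ne g h with rfl | hne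
  · simp [ball1]
  · simp [ball1, cayleyGraph, hne, hne.symm, inv_mul_eq_one]

theorem bijOn_mul_left_ball1 (g : G) :
    Set.BijOn (g * ·) (ball1 T) (insert g ((cayleyGraph G T).neighborSet g)) :=
  ⟨fun x hx => mem_insert_neighborSet_cayleyGraph.2 (by simpa using hx),
    (mul_right_injective g).injOn,
    fun h hh => ⟨g⁻¹ * h, mem_insert_neighborSet_cayleyGraph.1 hh, mul_inv_cancel_left g h⟩⟩

end Cayley

section Chart

variable {G : Type u} [Group G] {S T : Set G} {W : Type v} {Δ : SimpleGraph W} {ψ : G → W}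

theorem BallIsoAt.bijOn_ball1 {g : G} (h : BallIsoAt (cayleyGraph G T) Δ ψ g) :
    Set.BijOn (fun x => ψ (g * x)) (ball1 T) (insert (ψ g) (Δ.neighborSet (ψ g))) :=
  h.1.comp (bijOn_mul_left_ball1 g)

theorem BallIsoAt.adj_iff_ball1 {g x y : G} (h : BallIsoAt (cayleyGraph G T) Δ ψ g)
    (hx : x ∈ ball1 T) (hy : y ∈ ball1 T) :
    Δ.Adj (ψ (g * x)) (ψ (g * y)) ↔ (cayleyGraph G T).Adj x y :=
  (h.2 _ ((bijOn_mul_left_ball1 g).mapsTo hx) _ ((bijOn_mul_left_ball1 g).mapsTo hy)).symm.trans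
    (cayleyGraph_adj_mul_left g x y)

theorem ballAutoFixing_transition {g g' : G} (hg : BallIsoAt (cayleyGraph G T) Δ ψ g)
    (hg' : BallIsoAt (cayleyGraph G T) Δ ψ g') (φ : Δ ≃g Δ) (hφ : φ (ψ g') = ψ g) :
    BallAutoFixing T
      (Function.invFunOn (fun x => ψ (g * x)) (ball1 T) ∘ φ ∘ fun x => ψ (g' * x)) := by
  set ρ := Function.invFunOn (fun x => ψ (g * x)) (ball1 T)
  have hinv : Set.InvOn ρ _ _ _ := hg.bijOn_ball1.invOn_invFunOn
  have hρ := hg.bijOn_ball1.symm hinv.symm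
  have hφ' := φ.bijOn_insert_neighborSet (ψ g')
  rw [hφ] at hφ'
  have hmaps : ∀ x ∈ ball1 T, φ (ψ (g' * x)) ∈ insert (ψ g) (Δ.neighborSet (ψ g)) :=
    fun x hx => hφ'.mapsTo (hg'.bijOn_ball1.mapsTo hx)
  have hσρ : ∀ x ∈ ball1 T, ψ (g * ρ (φ (ψ (g' * x)))) = φ (ψ (g' * x)) :=
    fun x hx => hinv.2 (hmaps x hx)
  refine ⟨hρ.comp (hφ'.comp hg'.bijOn_ball1), ?_, ?_⟩
  · simpa [hφ] using hinv.1 (show (1 : G) ∈ ball1 T from Set.mem_insert _ _)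
  · intro x hx y hy
    simp only [Function.comp_apply]
    rw [← hg.adj_iff_ball1 (hρ.mapsTo (hmaps x hx)) (hρ.mapsTo (hmaps y hy)), hσρ x hx,
      hσρ y hy, φ.map_adj_iff]
    exact hg'.adj_iff_ball1 hx hy

theorem StrongGRRTriple.apply_mul_eq (hstrong : StrongGRRTriple S T) (hST : S ⊆ T)
    (hball : ∀ v, BallIsoAt (cayleyGraph G T) Δ ψ v) (φ : Δ ≃g Δ) {g g' x : G}
    (hφ : φ (ψ g') = ψ g) (hx : x ∈ ball1 S) : φ (ψ (g' * x)) = ψ (g * x) := by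
  have hfix := hstrong _ (ballAutoFixing_transition (hball g) (hball g') φ hφ) x hx
  have hmaps := (φ.bijOn_insert_neighborSet (ψ g')).mapsTo
    ((hball g').bijOn_ball1.mapsTo (ball1_mono hST hx))
  rw [hφ] at hmaps
  calc φ (ψ (g' * x))
      = ψ (g * Function.invFunOn (fun x => ψ (g * x)) (ball1 T) (φ (ψ (g' * x)))) :=
        ((hball g).bijOn_ball1.invOn_invFunOn.2 hmaps).symm
    _ = ψ (g * x) := congrArg (fun y => ψ (g * y)) hfix

theorem StrongGRRTriple.apply_eq_of_adj (hstrong : StrongGRRTriple S T) (hST : S ⊆ T)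
    (hball : ∀ v, BallIsoAt (cayleyGraph G T) Δ ψ v) (φ : Δ ≃g Δ) {g g₁ h₁ : G}
    (hadj : (cayleyGraph G S).Adj g₁ h₁) (hφ : φ (ψ g₁) = ψ g) :
    (cayleyGraph G S).Adj g (g * g₁⁻¹ * h₁) ∧ φ (ψ h₁) = ψ (g * g₁⁻¹ * h₁) := by
  constructor
  · simpa using (cayleyGraph_adj_mul_left (g * g₁⁻¹) _ _).2 hadj
  · simpa [mul_assoc] using
      hstrong.apply_mul_eq hST hball φ hφ (Set.mem_insert_of_mem _ hadj.2)

end Chart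

theorem coverings_of_strong_GRR_general {G : Type u} [Group G] (S T : Set G) (hST : S ⊆ T)
    (hstrong : StrongGRRTriple S T)
    {W : Type v} (Δ : SimpleGraph W) (ψ : G → W)
    (hball : ∀ v : G, BallIsoAt (cayleyGraph G T) Δ ψ v) :
    ∃ Δ' : SimpleGraph W, Δ' ≤ Δ ∧ IsGraphCovering (cayleyGraph G S) Δ' ψ ∧
      CompatibleWithLabels S ψ ∧
      ∀ φ : Equiv.Perm W, IsGraphAuto Δ φ →
        ∀ x y : W, Δ'.Adj (φ x) (φ y) ↔ Δ'.Adj x y := by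
  have hmem : ∀ {g h : G}, (cayleyGraph G S).Adj g h →
      h ∈ insert g ((cayleyGraph G T).neighborSet g) :=
    fun hgh => Set.mem_insert_of_mem _ (cayleyGraph_mono hST hgh)
  let f : cayleyGraph G S →g Δ :=
    ⟨ψ, fun hgh => ((hball _).2 _ (Set.mem_insert _ _) _ (hmem hgh)).1 (cayleyGraph_mono hST hgh)⟩
  refine ⟨f.autSaturation, f.autSaturation_le, fun g => ⟨fun _ => f.adj_autSaturation,
    fun h hh h' hh' => (hball g).1.injOn (hmem hh) (hmem hh'), ?_⟩, ?_,
    fun φ hφ x y => f.autSaturation_adj_iso_iff ⟨φ, hφ _ _⟩⟩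
  · rintro _ ⟨φ, g₁, h₁, hadj, hφ, rfl⟩
    obtain ⟨hadj', heq⟩ := hstrong.apply_eq_of_adj hST hball φ hadj hφ
    exact ⟨_, hadj', heq.symm⟩
  · intro g h g' h' hgh hgh' hg hh
    obtain ⟨hadj', heq⟩ := hstrong.apply_eq_of_adj hST hball (RelIso.refl _) hgh' hg.symm
    have : g * g'⁻¹ * h' = h :=
      (hball g).1.injOn (hmem hadj') (hmem hgh) (heq.symm.trans hh.symm)
    left
    rw [← this]
    group

/-- **Proposition (coverings).** If `(G,S,T)` is a strong GRR triple, then every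
covering `ψ : Cay(G,T) → Δ` whose restrictions to balls of radius 1 are isomorphisms
restricts on `Cay(G,S)` to a covering onto a subgraph `Δ'` of `Δ`, compatible with the
labels of `Cay(G,S)`; moreover `Δ'` is invariant under all automorphisms of `Δ`. -/
theorem coverings_of_strong_GRR {G : Type u} [Group G] (S T : Set G) (hST : S ⊆ T)
    (h1T : (1 : G) ∉ T) (hSgen : Subgroup.closure S = ⊤)
    (hTgen : Subgroup.closure T = ⊤) (hstrong : StrongGRRTriple S T)
    {W : Type v} (Δ : SimpleGraph W) (ψ : G → W)
    (hcov : IsGraphCovering (cayleyGraph G T) Δ ψ)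
    (hball : ∀ v : G, BallIsoAt (cayleyGraph G T) Δ ψ v) :
    ∃ Δ' : SimpleGraph W, Δ' ≤ Δ ∧ IsGraphCovering (cayleyGraph G S) Δ' ψ ∧
      CompatibleWithLabels S ψ ∧
      ∀ φ : Equiv.Perm W, IsGraphAuto Δ φ →
        ∀ x y : W, Δ'.Adj (φ x) (φ y) ↔ Δ'.Adj x y :=
  coverings_of_strong_GRR_general S T hST hstrong Δ ψ hball
end

section
/- Let G be a group and S a generating set with 1 ∉ S. If (G,S) is a colour-rigid pair, then S contains a generating subset S' of G such that the directed Cayley graph Cay⃗(G,S') is a DRR. -/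
open scoped Pointwise

universe u v

/-! Choosing one element of each pair `{s, s⁻¹} ⊆ S` gives `S' ⊆ S` with the same undirected
Cayley graph, in which `s, s⁻¹ ∈ S'` only for involutions `s`. An automorphism `φ` of
`Cay⃗(G,S')` is then an automorphism of `Cay(G,S)`, hence colour-preserving by colour-rigidity;
as `φ` also preserves the direction of every arc, `φ (g * s) = φ g * s` for `s ∈ S'`, and since
`S'` generates `G`, `φ` is left multiplication by `φ 1`. -/

section Cayley

variable {G : Type u} [Group G]

theorem Set.exists_subset_union_inv_eq_without_inverse_pairs {α : Type*} [InvolutiveInv α]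
    (S : Set α) :
    ∃ S' ⊆ S, S' ∪ S'⁻¹ = S ∪ S⁻¹ ∧ ∀ s ∈ S', s⁻¹ ∈ S' → s⁻¹ = s := by
  let r : α → α → Prop := WellOrderingRel
  let S' : Set α := {s ∈ S | s⁻¹ ∈ S → ¬ r s⁻¹ s}
  have hsub : S' ⊆ S := fun s hs => hs.1
  have hcover : S ⊆ S' ∪ S'⁻¹ := by
    intro s hs
    by_cases h : s⁻¹ ∈ S → ¬ r s⁻¹ s
    · exact Or.inl ⟨hs, h⟩
    · push Not at h
      exact Or.inr ⟨h.1, fun _ => by rw [inv_inv]; exact asymm h.2⟩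
  refine ⟨S', hsub, ?_, ?_⟩
  · refine subset_antisymm (Set.union_subset_union hsub (Set.inv_subset_inv.2 hsub)) ?_
    refine Set.union_subset hcover ?_
    simpa [Set.union_comm] using Set.inv_subset_inv.2 hcover
  · rintro s ⟨hsS, hs⟩ ⟨hsi, hsi'⟩
    rw [inv_inv] at hsi'
    rcases trichotomous_of r s⁻¹ s with h | h | h
    · exact absurd h (hs hsi)
    · exact h
    · exact absurd h (hsi' hsS)

theorem Subgroup.closure_eq_of_union_inv_eq {S T : Set G} (h : S ∪ S⁻¹ = T ∪ T⁻¹) :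
    Subgroup.closure S = Subgroup.closure T := by
  have key : ∀ U : Set G, Subgroup.closure (U ∪ U⁻¹) = Subgroup.closure U := fun U => by
    rw [Subgroup.closure_union, Subgroup.closure_inv, sup_idem]
  rw [← key S, h, key]

theorem cayleyGraph_eq_of_union_inv_eq {S T : Set G} (h : S ∪ S⁻¹ = T ∪ T⁻¹) :
    cayleyGraph G S = cayleyGraph G T := by
  ext g k
  simp only [cayleyGraph, h]

theorem colourRigidPair_congr {S T : Set G} (h : S ∪ S⁻¹ = T ∪ T⁻¹) :
    ColourRigidPair S ↔ ColourRigidPair T := by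
  simp only [ColourRigidPair, IsColourPreserving, cayleyGraph_eq_of_union_inv_eq h, h]

theorem isGraphAuto_cayleyGraph_of_arcs {S : Set G} {φ : Equiv.Perm G}
    (hφ : ∀ g h : G, (φ g)⁻¹ * φ h ∈ S ↔ g⁻¹ * h ∈ S) :
    IsGraphAuto (cayleyGraph G S) φ := by
  intro x y
  have hinv : ∀ g h : G, (g⁻¹ * h)⁻¹ = h⁻¹ * g := fun g h => by group
  refine and_congr φ.injective.ne_iff ?_
  simp only [Set.mem_union, Set.mem_inv, hinv, hφ]

theorem map_mul_eq_mul_of_mem_closure {S : Set G} {φ : G → G}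
    (hφ : ∀ g, ∀ s ∈ S, φ (g * s) = φ g * s) {x : G} (hx : x ∈ Subgroup.closure S)
    (g : G) : φ (g * x) = φ g * x := by
  induction hx using Subgroup.closure_induction generalizing g with
  | mem s hs => exact hφ g s hs
  | one => simp
  | mul x y _ _ hx hy => rw [← mul_assoc, hy, hx, mul_assoc]
  | inv x _ hx => rw [eq_mul_inv_iff_mul_eq, ← hx, inv_mul_cancel_right]

theorem map_mul_eq_mul_of_isColourPreserving {S : Set G} {φ : Equiv.Perm G}
    (hS : ∀ s ∈ S, s⁻¹ ∈ S → s⁻¹ = s) (hcp : IsColourPreserving S φ)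
    (hφ : ∀ g h : G, (φ g)⁻¹ * φ h ∈ S ↔ g⁻¹ * h ∈ S) (g : G) {s : G} (hs : s ∈ S) :
    φ (g * s) = φ g * s := by
  rcases hcp g s (Or.inl hs) with h | h
  · exact h
  · have hsi : s⁻¹ ∈ S := by simpa [h] using (hφ g (g * s)).2 (by simpa using hs)
    rw [h, hS s hs hsi]

theorem isDRR_of_colourRigidPair {S : Set G} (hgen : Subgroup.closure S = ⊤)
    (hcr : ColourRigidPair S) (hS : ∀ s ∈ S, s⁻¹ ∈ S → s⁻¹ = s) : IsDRR S := by
  intro φ hφ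
  have hcp := hcr φ (isGraphAuto_cayleyGraph_of_arcs hφ)
  refine ⟨φ 1, fun x => ?_⟩
  simpa using map_mul_eq_mul_of_mem_closure
    (fun g s hs => map_mul_eq_mul_of_isColourPreserving hS hcp hφ g hs)
    (hgen ▸ Subgroup.mem_top x) 1

end Cayley

theorem colour_rigid_gives_DRR_general {G : Type u} [Group G] (S : Set G)
    (hgen : Subgroup.closure S = ⊤) (hcr : ColourRigidPair S) :
    ∃ S' ⊆ S, Subgroup.closure S' = ⊤ ∧ IsDRR S' := by
  obtain ⟨S', hS'S, hunion, hS'⟩ := Set.exists_subset_union_inv_eq_without_inverse_pairs S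
  have hgen' : Subgroup.closure S' = ⊤ := by
    rwa [Subgroup.closure_eq_of_union_inv_eq hunion]
  exact ⟨S', hS'S, hgen', isDRR_of_colourRigidPair hgen' ((colourRigidPair_congr hunion).2 hcr) hS'⟩

/-- **Proposition.** If `(G,S)` is a colour-rigid pair, then `S` contains a generating
subset `S'` such that the directed Cayley graph `Cay⃗(G,S')` is a DRR. -/
theorem colour_rigid_gives_DRR {G : Type u} [Group G] (S : Set G) (h1S : (1 : G) ∉ S)
    (hgen : Subgroup.closure S = ⊤) (hcr : ColourRigidPair S) :
    ∃ S' ⊆ S, Subgroup.closure S' = ⊤ ∧ IsDRR S' :=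
  colour_rigid_gives_DRR_general S hgen hcr
end

section
/- Let G be a group, T a symmetric generating set of G with 1 ∉ T, and φ ∈ B(G,T). Set A = {g ∈ T ∪ {1} : φ(g) = g} and B = {g ∈ T : φ(g) = g⁻¹ ≠ g}. Let g ∈ A and h ∈ B be such that hg ∈ T and g⁻¹h ∈ T. Then hgh⁻¹ = g⁻¹. Moreover, if hg ∈ A, then the subgroup ⟨h,g⟩ is isomorphic to the quaternion group Q₈. -/
open scoped Pointwise

universe u v

/-!
Applying the defining condition of `𝓑(G,T)` to `h = g * (g⁻¹ * h)` gives
`h⁻¹ = φ h ∈ {h, g * h⁻¹ * g}`, and `h⁻¹ ≠ h` forces `h * g * h⁻¹ = g⁻¹`. If moreover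
`φ (h * g) = h * g`, applying it to `h * g` itself gives `h * g ∈ {h⁻¹ * g, h⁻¹ * g⁻¹}`, so
`h² = g⁻²`; conjugating by `h` turns this into `h² = g²`, whence `g⁴ = 1 ≠ g²`. These are the
defining relations `a⁴ = 1, x² = a², x a x⁻¹ = a⁻¹` of `Q₈`, and the map `Q₈ → ⟨h, g⟩` they
induce is injective because `g` has order exactly `4` and the relations force `h ∉ ⟨g⟩`.
-/

section ZModPow

variable {G : Type*} [Group G] {m : ℕ} [NeZero m] {a : G}

theorem pow_zmod_val_add (ha : a ^ m = 1) (i j : ZMod m) :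
    a ^ (i + j).val = a ^ i.val * a ^ j.val := by
  rw [ZMod.val_add, ← pow_eq_pow_mod _ ha, pow_add]

theorem pow_zmod_val_neg (ha : a ^ m = 1) (i : ZMod m) : a ^ (-i).val = (a ^ i.val)⁻¹ :=
  eq_inv_of_mul_eq_one_left <| by
    rw [← pow_zmod_val_add ha, neg_add_cancel, ZMod.val_zero, pow_zero]

end ZModPow

theorem pow_mul_eq_mul_inv_pow {G : Type*} [Group G] {a x : G} (hxa : x * a * x⁻¹ = a⁻¹)
    (k : ℕ) : a ^ k * x = x * (a ^ k)⁻¹ := by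
  have hsemi : SemiconjBy x (a ^ k) (a ^ k)⁻¹ := by
    rw [← inv_pow]
    exact SemiconjBy.pow_right (mul_inv_eq_iff_eq_mul.mp hxa) k
  rw [eq_mul_inv_iff_mul_eq, mul_assoc, hsemi.eq, mul_inv_cancel_left]

namespace QuaternionGroup

variable {G : Type*} [Group G] {n : ℕ} [NeZero n] {a x : G}

def liftOfRelations (ha : a ^ (2 * n) = 1) (hx : x ^ 2 = a ^ n) (hxa : x * a * x⁻¹ = a⁻¹) :
    QuaternionGroup n →* G where
  toFun
    | .a i => a ^ i.val
    | .xa i => x * a ^ i.val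
  map_one' := show a ^ (0 : ZMod (2 * n)).val = 1 by rw [ZMod.val_zero, pow_zero]
  map_mul' := by
    rintro (i | i) (j | j)
    · simp only [a_mul_a, pow_zmod_val_add ha]
    · simp only [a_mul_xa, sub_eq_neg_add, pow_zmod_val_add ha, pow_zmod_val_neg ha]
      rw [← mul_assoc (a ^ i.val), pow_mul_eq_mul_inv_pow hxa, mul_assoc]
    · simp only [xa_mul_a, pow_zmod_val_add ha, mul_assoc]
    · have hn : ((n : ZMod (2 * n))).val = n := by
        rw [ZMod.val_natCast, Nat.mod_eq_of_lt]
        have := NeZero.pos n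
        omega
      simp only [xa_mul_xa, sub_eq_add_neg, pow_zmod_val_add ha,
        pow_zmod_val_neg ha, hn]
      rw [mul_assoc x, ← mul_assoc (a ^ i.val), pow_mul_eq_mul_inv_pow hxa, ← hx, sq]
      group

theorem notMem_zpowers_of_relations (ha : orderOf a = 2 * n) (hx : x ^ 2 = a ^ n)
    (hxa : x * a * x⁻¹ = a⁻¹) : x ∉ Subgroup.zpowers a := by
  rintro ⟨k, rfl⟩
  have hinv : a⁻¹ = a := by
    rw [← hxa]
    group
  have ha2 : a ^ 2 = 1 := by
    rw [sq]
    nth_rw 1 [← hinv]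
    exact inv_mul_cancel a
  have hn : n = 1 := by
    have := Nat.le_of_dvd two_pos (ha ▸ orderOf_dvd_of_pow_eq_one ha2)
    have := NeZero.pos n
    omega
  subst hn
  have ha1 : a = 1 := by
    rw [← pow_one a, ← hx, ← zpow_natCast, ← zpow_mul, mul_comm, zpow_mul, zpow_natCast, ha2,
      one_zpow]
  simp [ha1] at ha

theorem liftOfRelations_injective (ha : orderOf a = 2 * n) (hx : x ^ 2 = a ^ n)
    (hxa : x * a * x⁻¹ = a⁻¹) :
    Function.Injective (liftOfRelations (ha ▸ pow_orderOf_eq_one a) hx hxa) := by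
  rw [injective_iff_map_eq_one]
  rintro (i | i) h
  · change a ^ i.val = 1 at h
    have hdvd := orderOf_dvd_of_pow_eq_one h
    rw [ha] at hdvd
    have hi : i.val = 0 := Nat.eq_zero_of_dvd_of_lt hdvd (ZMod.val_lt i)
    rw [(ZMod.val_eq_zero i).mp hi, a_zero]
  · change x * a ^ i.val = 1 at h
    exact absurd (eq_inv_of_mul_eq_one_left h ▸ inv_mem (pow_mem (Subgroup.mem_zpowers a) _))
      (notMem_zpowers_of_relations ha hx hxa)

theorem range_liftOfRelations (ha : a ^ (2 * n) = 1) (hx : x ^ 2 = a ^ n)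
    (hxa : x * a * x⁻¹ = a⁻¹) :
    (liftOfRelations ha hx hxa).range = Subgroup.closure {x, a} := by
  have hxc : x ∈ Subgroup.closure {x, a} := Subgroup.subset_closure (by simp)
  have hac : a ∈ Subgroup.closure {x, a} := Subgroup.subset_closure (by simp)
  refine le_antisymm ?_ ?_
  · rintro _ ⟨i | i, rfl⟩
    · exact pow_mem hac _
    · exact mul_mem hxc (pow_mem hac _)
  · rw [Subgroup.closure_le, Set.insert_subset_iff, Set.singleton_subset_iff]
    refine ⟨⟨xa 0, show x * a ^ (0 : ZMod (2 * n)).val = x by simp⟩,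
      ⟨QuaternionGroup.a 1, show a ^ (1 : ZMod (2 * n)).val = a from ?_⟩⟩
    rw [ZMod.val_one'' (by have := NeZero.pos n; omega), pow_one]

theorem nonempty_closure_mulEquiv_of_relations (ha : orderOf a = 2 * n) (hx : x ^ 2 = a ^ n)
    (hxa : x * a * x⁻¹ = a⁻¹) : Nonempty (Subgroup.closure {x, a} ≃* QuaternionGroup n) :=
  ⟨((MonoidHom.ofInjective (liftOfRelations_injective ha hx hxa)).trans
    (MulEquiv.subgroupCongr (range_liftOfRelations _ hx hxa))).symm⟩

end QuaternionGroup

namespace MemBallPermGroup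

variable {G : Type*} [Group G] {T : Set G} {φ : G → G} {g h : G}

theorem conj_eq_inv (hφ : MemBallPermGroup T φ) (hgT : g ∈ insert 1 T) (hgA : φ g = g)
    (hhT : h ∈ T) (hhB : φ h = h⁻¹) (hhB' : h⁻¹ ≠ h) (hgh : g⁻¹ * h ∈ T) :
    h * g * h⁻¹ = g⁻¹ := by
  have key := hφ.2.2 g hgT (g⁻¹ * h) hgh (by rwa [mul_inv_cancel_left])
  rw [mul_inv_cancel_left, hgA, hhB, mul_inv_rev, inv_inv, mul_inv_cancel_left] at key
  calc h * g * h⁻¹ = h * (g * (h⁻¹ * g)) * g⁻¹ := by group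
    _ = g⁻¹ := by rw [← key.resolve_left hhB']; group

theorem mul_eq_inv_mul_inv (hφ : MemBallPermGroup T φ) (hgT : g ∈ T) (hhT : h ∈ T)
    (hhB : φ h = h⁻¹) (hhB' : h⁻¹ ≠ h) (hhg : h * g ∈ T) (hfix : φ (h * g) = h * g) :
    h * g = h⁻¹ * g⁻¹ := by
  have key := hφ.2.2 h (Set.mem_insert_of_mem 1 hhT) g hgT hhg
  rw [hfix, hhB] at key
  exact key.resolve_left fun e => hhB' (mul_right_cancel e).symm

end MemBallPermGroup

section Anticommuting

variable {G : Type*} [Group G] {g h : G}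

theorem sq_eq_sq_of_conj_eq_inv (hconj : h * g * h⁻¹ = g⁻¹) (hmul : h * g = h⁻¹ * g⁻¹) :
    h ^ 2 = g ^ 2 := by
  have hsq : h ^ 2 = (g ^ 2)⁻¹ :=
    calc h ^ 2 = h * (h * g) * g⁻¹ := by rw [sq, ← mul_assoc, mul_inv_cancel_right]
      _ = (g ^ 2)⁻¹ := by rw [hmul]; group
  calc h ^ 2 = h * h ^ 2 * h⁻¹ := by group
    _ = ((h * g * h⁻¹) ^ 2)⁻¹ := by rw [hsq, conj_pow]; group
    _ = g ^ 2 := by rw [hconj]; group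

theorem orderOf_eq_four_of_conj_eq_inv (hconj : h * g * h⁻¹ = g⁻¹) (hsq : h ^ 2 = g ^ 2)
    (hh : h ^ 2 ≠ 1) : orderOf g = 4 := by
  have hg2 : g ^ 2 = (g ^ 2)⁻¹ :=
    calc g ^ 2 = h * h ^ 2 * h⁻¹ := by rw [← hsq]; group
      _ = (h * g * h⁻¹) ^ 2 := by rw [hsq, conj_pow]
      _ = (g ^ 2)⁻¹ := by rw [hconj, inv_pow]
  refine orderOf_eq_prime_pow (p := 2) (n := 1) (by rwa [pow_one, ← hsq]) ?_
  rw [show 2 ^ (1 + 1) = 2 + 2 from rfl, pow_add]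
  nth_rw 2 [hg2]
  exact mul_inv_cancel _

end Anticommuting

theorem anticommutant_lemma_general {G : Type u} [Group G] (T : Set G)
    (φ : G → G) (hφ : MemBallPermGroup T φ)
    (g h : G) (hgT : g ∈ insert (1 : G) T) (hgA : φ g = g)
    (hhT : h ∈ T) (hhB : φ h = h⁻¹) (hhB' : h⁻¹ ≠ h)
    (hhg : h * g ∈ T) (hgh : g⁻¹ * h ∈ T) :
    h * g * h⁻¹ = g⁻¹ ∧
      (φ (h * g) = h * g →
        Nonempty (↥(Subgroup.closure ({h, g} : Set G)) ≃* QuaternionGroup 2)) := by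
  have hconj := hφ.conj_eq_inv hgT hgA hhT hhB hhB' hgh
  refine ⟨hconj, fun hfix => ?_⟩
  obtain rfl | hgT := hgT
  · rw [mul_one, hhB] at hfix
    exact absurd hfix hhB'
  have hsq := sq_eq_sq_of_conj_eq_inv hconj (hφ.mul_eq_inv_mul_inv hgT hhT hhB hhB' hhg hfix)
  have hh : h ^ 2 ≠ 1 := fun e => hhB' (inv_eq_of_mul_eq_one_right (sq h ▸ e))
  exact QuaternionGroup.nonempty_closure_mulEquiv_of_relations
    (orderOf_eq_four_of_conj_eq_inv hconj hsq hh) hsq hconj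

/-- **Lemma (anticommutation).** Let `T` be a symmetric generating set of `G` with
`1 ∉ T` and `φ ∈ 𝓑(G,T)`. If `g` is fixed by `φ` (i.e. `g ∈ A`), `h ∈ T` satisfies
`φ h = h⁻¹ ≠ h` (i.e. `h ∈ B`), and `h*g, g⁻¹*h ∈ T`, then `h*g*h⁻¹ = g⁻¹`; moreover
if `h*g ∈ A` then `⟨h,g⟩ ≅ Q₈`. -/
theorem anticommutant_lemma {G : Type u} [Group G] (T : Set G) (hsym : T⁻¹ = T)
    (h1T : (1 : G) ∉ T) (hgen : Subgroup.closure T = ⊤)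
    (φ : G → G) (hφ : MemBallPermGroup T φ)
    (g h : G) (hgT : g ∈ insert (1 : G) T) (hgA : φ g = g)
    (hhT : h ∈ T) (hhB : φ h = h⁻¹) (hhB' : h⁻¹ ≠ h)
    (hhg : h * g ∈ T) (hgh : g⁻¹ * h ∈ T) :
    h * g * h⁻¹ = g⁻¹ ∧
      (φ (h * g) = h * g →
        Nonempty (↥(Subgroup.closure ({h, g} : Set G)) ≃* QuaternionGroup 2)) :=
  anticommutant_lemma_general T φ hφ g h hgT hgA hhT hhB hhB' hhg hgh
end

section
/- Let G be a group, T a symmetric generating set of G with 1 ∉ T, and φ ∈ B(G,T). Set A = {g ∈ T ∪ {1} : φ(g) = g} and B = {g ∈ T : φ(g) = g⁻¹ ≠ g}. Let g, h ∈ A and f ∈ B be such that the seven elements gh, fg, g⁻¹f, fh, h⁻¹f, fgh, (gh)⁻¹f all lie in T. Then ghg⁻¹ ∈ {h, h⁻¹}; more precisely, if gh ∈ B then ⟨g,h⟩ is isomorphic to the quaternion group Q₈, while if gh ∈ A then g and h commute. -/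
open scoped Pointwise

universe u v

/-!
Every `φ ∈ 𝓑(G,T)` sends each `t ∈ T` to `t` or `t⁻¹`, and, being injective, commutes with
inversion on `T`. If `φ` fixes `a` and inverts `f` with `a⁻¹f ∈ T`, the defining condition at
`f = a · (a⁻¹f)` forces `f a f⁻¹ = a⁻¹`. So when `gh` is fixed, conjugation by `f` inverts `g`,
`h` and `gh`, hence `g` and `h` commute. When `gh` is inverted, the condition at `g · h` gives
`(gh)⁻¹ = gh⁻¹`, and the condition at `(gh)⁻¹ · g` gives `ghg⁻¹ = h⁻¹` (the alternative
`h⁻¹ = ghg` would force `h = h⁻¹`). These two relations yield `h⁻¹gh = g⁻¹` and `h² = g²`, while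
`(gh)⁻¹ ≠ gh` gives `g² ≠ 1`; the presentation `⟨a, x | a⁴ = 1, x² = a², x⁻¹ax = a⁻¹⟩` of `Q₈`
then identifies `⟨g, h⟩` with `Q₈`.
-/

section ZModPow

variable {G : Type*} [Group G] {m : ℕ} [NeZero m] {a : G}

theorem pow_zmod_val_sub (ha : a ^ m = 1) (i j : ZMod m) :
    a ^ (i - j).val = a ^ i.val * (a ^ j.val)⁻¹ := by
  rw [sub_eq_add_neg, pow_zmod_val_add ha, pow_zmod_val_neg ha]

end ZModPow

theorem pow_mul_eq_mul_inv_pow_of_conj_eq_inv {G : Type*} [Group G] {a x : G}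
    (hxa : x⁻¹ * a * x = a⁻¹) (k : ℕ) : a ^ k * x = x * (a ^ k)⁻¹ := by
  have hconj : x⁻¹ * a ^ k * x = (a ^ k)⁻¹ := by
    rw [← inv_pow, ← hxa]
    simpa using (conj_pow (a := x⁻¹) (b := a) (i := k)).symm
  rw [← hconj]
  group

namespace QuaternionGroup

variable {G : Type*} [Group G] {n : ℕ} [NeZero n] {a x : G}

def lift (a x : G) (ha : a ^ (2 * n) = 1) (hx : x ^ 2 = a ^ n) (hxa : x⁻¹ * a * x = a⁻¹) :
    QuaternionGroup n →* G where
  toFun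
    | .a i => a ^ i.val
    | .xa i => x * a ^ i.val
  map_one' := by
    change a ^ (0 : ZMod (2 * n)).val = 1
    rw [ZMod.val_zero, pow_zero]
  map_mul' := by
    have hn : ((n : ZMod (2 * n))).val = n := by
      rw [ZMod.val_natCast, Nat.mod_eq_of_lt]
      have := NeZero.pos n
      omega
    rintro (i | i) (j | j)
    · simp only [a_mul_a, pow_zmod_val_add ha]
    · simp only [a_mul_xa, pow_zmod_val_sub ha]
      rw [← mul_assoc (a ^ i.val) x, pow_mul_eq_mul_inv_pow_of_conj_eq_inv hxa]
      group
    · simp only [xa_mul_a, pow_zmod_val_add ha, mul_assoc]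
    · simp only [xa_mul_xa, pow_zmod_val_sub ha, pow_zmod_val_add ha, hn, ← hx]
      rw [pow_two, mul_assoc x (a ^ i.val), ← mul_assoc (a ^ i.val) x,
        pow_mul_eq_mul_inv_pow_of_conj_eq_inv hxa]
      group

section

variable {ha : a ^ (2 * n) = 1} {hx : x ^ 2 = a ^ n} {hxa : x⁻¹ * a * x = a⁻¹}

theorem lift_injective (horder : orderOf a = 2 * n) (hxz : x ∉ Subgroup.zpowers a) :
    Function.Injective (lift a x ha hx hxa) := by
  refine (injective_iff_map_eq_one _).mpr ?_
  rintro (i | i) hi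
  · change a ^ i.val = 1 at hi
    rw [← orderOf_dvd_iff_pow_eq_one, horder] at hi
    rw [one_def, (ZMod.val_eq_zero i).mp (Nat.eq_zero_of_dvd_of_lt hi (ZMod.val_lt i))]
  · change x * a ^ i.val = 1 at hi
    exact (hxz (eq_inv_of_mul_eq_one_left hi ▸ inv_mem (Subgroup.npow_mem_zpowers a i.val))).elim

theorem range_lift : (lift a x ha hx hxa).range = Subgroup.closure {a, x} := by
  have hclosure : ∀ q, lift a x ha hx hxa q ∈ Subgroup.closure {a, x} := by
    have hamem : a ∈ Subgroup.closure {a, x} := Subgroup.subset_closure (by simp)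
    have hxmem : x ∈ Subgroup.closure {a, x} := Subgroup.subset_closure (by simp)
    rintro (i | i)
    · exact pow_mem hamem _
    · exact mul_mem hxmem (pow_mem hamem _)
  refine le_antisymm (by rintro _ ⟨q, rfl⟩; exact hclosure q) ((Subgroup.closure_le _).mpr ?_)
  rw [Set.insert_subset_iff, Set.singleton_subset_iff]
  refine ⟨⟨.a 1, ?_⟩, ⟨.xa 0, by simp [lift]⟩⟩
  change a ^ (1 : ZMod (2 * n)).val = a
  rw [ZMod.val_one_eq_one_mod, ← pow_eq_pow_mod 1 ha, pow_one]

end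

theorem nonempty_mulEquiv_closure (horder : orderOf a = 2 * n) (hx : x ^ 2 = a ^ n)
    (hxa : x⁻¹ * a * x = a⁻¹) (hxz : x ∉ Subgroup.zpowers a) :
    Nonempty (Subgroup.closure {a, x} ≃* QuaternionGroup n) :=
  have ha : a ^ (2 * n) = 1 := horder ▸ pow_orderOf_eq_one a
  ⟨((MonoidHom.ofInjective (lift_injective (ha := ha) (hx := hx) (hxa := hxa) horder hxz)).trans
    (MulEquiv.subgroupCongr range_lift)).symm⟩

end QuaternionGroup

theorem nonempty_closure_mulEquiv_quaternionGroup_two {G : Type*} [Group G] {g h : G}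
    (hinv : (g * h)⁻¹ = g * h⁻¹) (hconj : g * h * g⁻¹ = h⁻¹) (hne : (g * h)⁻¹ ≠ g * h) :
    Nonempty (Subgroup.closure ({g, h} : Set G) ≃* QuaternionGroup 2) := by
  have hhg : h⁻¹ * g * h = g⁻¹ := by
    rw [mul_inv_rev] at hinv
    calc h⁻¹ * g * h = (h⁻¹ * g⁻¹ * h)⁻¹ := by group
      _ = g⁻¹ := by rw [hinv]; group
  have hsq : h * h = g * g := by
    calc h * h = h * (h * g⁻¹) * g := by group
      _ = h * (g * h) * g := by rw [← hhg]; group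
      _ = h * (h⁻¹ * g) * g := by rw [← hconj]; group
      _ = g * g := by group
  have hg2 : g * g ≠ 1 := by
    rw [← hsq]
    intro h2
    exact hne (by rw [hinv, inv_eq_of_mul_eq_one_right h2])
  have hginv : (g * g)⁻¹ = g * g := by
    calc (g * g)⁻¹ = (h⁻¹ * g * h) * (h⁻¹ * g * h) := by rw [hhg, mul_inv_rev]
      _ = h⁻¹ * (g * g) * h := by group
      _ = g * g := by rw [← hsq]; group
  have hg4 : g ^ 2 ^ 2 = 1 := by
    rw [show g ^ 2 ^ 2 = (g * g)⁻¹ * (g * g) by rw [hginv]; norm_num [pow_succ, mul_assoc]]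
    exact inv_mul_cancel _
  have horder : orderOf g = 2 * 2 :=
    orderOf_eq_prime_pow (p := 2) (n := 1) (by rwa [pow_one, pow_two]) hg4
  refine QuaternionGroup.nonempty_mulEquiv_closure horder (by rw [pow_two, pow_two, hsq]) hhg ?_
  rintro ⟨k, rfl⟩
  apply hg2
  have hcomm : (g ^ k)⁻¹ * g * g ^ k = g := by group
  rw [hhg] at hcomm
  nth_rewrite 2 [← hcomm]
  exact mul_inv_cancel g

theorem commute_of_conj_eq_inv {G : Type*} [Group G] {c g h : G} (hg : c * g * c⁻¹ = g⁻¹)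
    (hh : c * h * c⁻¹ = h⁻¹) (hgh : c * (g * h) * c⁻¹ = (g * h)⁻¹) : g * h = h * g := by
  refine inv_injective ?_
  calc (g * h)⁻¹ = (c * g * c⁻¹) * (c * h * c⁻¹) := by rw [← hgh]; group
    _ = (h * g)⁻¹ := by rw [hg, hh, mul_inv_rev]

namespace MemBallPermGroup

variable {G : Type*} [Group G] {T : Set G} {φ : G → G} (hφ : MemBallPermGroup T φ)
include hφ

theorem map_eq_or_eq_inv {x : G} (hx : x ∈ T) : φ x = x ∨ φ x = x⁻¹ := by
  simpa [hφ.2.1] using hφ.2.2 1 (Set.mem_insert 1 T) x hx (by rwa [one_mul])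

theorem map_inv {x : G} (hx : x ∈ T) (hx' : x⁻¹ ∈ T) : φ x⁻¹ = (φ x)⁻¹ := by
  have hinj (e : φ x⁻¹ = φ x) : x⁻¹ = x :=
    hφ.1.injOn (Set.mem_insert_of_mem 1 hx') (Set.mem_insert_of_mem 1 hx) e
  rcases hφ.map_eq_or_eq_inv hx with h | h <;>
    rcases hφ.map_eq_or_eq_inv hx' with h' | h' <;> rw [h, h'] <;> rw [inv_inv]
  · exact (hinj (h'.trans (by rw [h, inv_inv]))).symm
  · exact hinj (h'.trans h.symm)

theorem conj_eq_inv_of_map_eq_self {a f : G} (ha : a ∈ insert 1 T) (hφa : φ a = a)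
    (hf : f ∈ T) (hφf : φ f = f⁻¹) (hf' : f⁻¹ ≠ f) (haf : a⁻¹ * f ∈ T) :
    f * a * f⁻¹ = a⁻¹ := by
  have hstep := hφ.2.2 a ha (a⁻¹ * f) haf (by rwa [mul_inv_cancel_left])
  rw [mul_inv_cancel_left, hφf, hφa, mul_inv_cancel_left] at hstep
  have hfa : f⁻¹ = a * f⁻¹ * a := hstep.resolve_left hf' |>.trans (by group)
  calc f * a * f⁻¹ = f * (a * f⁻¹ * a) * a⁻¹ := by group
    _ = a⁻¹ := by rw [← hfa]; group

theorem mul_inv_eq_of_map_mul_ne {g h : G} (hg : g ∈ insert 1 T) (hφg : φ g = g)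
    (hh : h ∈ insert 1 T) (hgh : g * h ∈ T) (hne : φ (g * h) ≠ g * h) :
    (g * h)⁻¹ = g * h⁻¹ := by
  have hhT : h ∈ T := hh.resolve_left (by rintro rfl; exact hne (by rw [mul_one, hφg]))
  have hφgh : φ (g * h) = (g * h)⁻¹ := (hφ.map_eq_or_eq_inv hgh).resolve_left hne
  have hstep := (hφ.2.2 g hg h hhT hgh).resolve_left (by rwa [hφg])
  rwa [hφg, hφgh] at hstep

theorem conj_eq_inv_of_map_mul_ne (hT : T⁻¹ = T) {g h : G} (hg : g ∈ insert 1 T)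
    (hφg : φ g = g) (hh : h ∈ insert 1 T) (hφh : φ h = h) (hgh : g * h ∈ T)
    (hne : φ (g * h) ≠ g * h) : g * h * g⁻¹ = h⁻¹ := by
  have hinvT {x : G} (hx : x ∈ T) : x⁻¹ ∈ T := hT ▸ Set.inv_mem_inv.mpr hx
  have hgT : g ∈ T := hg.resolve_left (by rintro rfl; exact hne (by rw [one_mul, hφh]))
  have hhT : h ∈ T := hh.resolve_left (by rintro rfl; exact hne (by rw [mul_one, hφg]))
  have hinv := hφ.mul_inv_eq_of_map_mul_ne hg hφg hh hgh hne
  have hφgh : φ (g * h) = (g * h)⁻¹ := (hφ.map_eq_or_eq_inv hgh).resolve_left hne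
  have hφgh' : φ (g * h)⁻¹ = g * h := by rw [hφ.map_inv hgh (hinvT hgh), hφgh, inv_inv]
  have hφh' : φ h⁻¹ = h⁻¹ := by rw [hφ.map_inv hhT (hinvT hhT), hφh]
  have hred : (g * h)⁻¹ * g = h⁻¹ := by group
  have hstep := hφ.2.2 (g * h)⁻¹ (Set.mem_insert_of_mem 1 (hinvT hgh)) g hgT
    (by rw [hred]; exact hinvT hhT)
  rw [hred, hφh', hφgh'] at hstep
  refine (hstep.resolve_left fun e => hne ?_).symm
  have hh' : h⁻¹ = g * h⁻¹ * g := by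
    rw [mul_inv_rev] at hinv
    calc h⁻¹ = h⁻¹ * g⁻¹ * g := by group
      _ = g * h⁻¹ * g := by rw [hinv]
  have hhinv : h = h⁻¹ := mul_left_cancel (mul_right_cancel (e.symm.trans hh'))
  rw [hφgh, hinv, ← hhinv]

end MemBallPermGroup

theorem abelian_lemma_general {G : Type u} [Group G] (T : Set G) (hsym : T⁻¹ = T)
    (φ : G → G) (hφ : MemBallPermGroup T φ)
    (g h f : G)
    (hgT : g ∈ insert (1 : G) T) (hgA : φ g = g)
    (hhT : h ∈ insert (1 : G) T) (hhA : φ h = h)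
    (hfT : f ∈ T) (hfB : φ f = f⁻¹) (hfB' : f⁻¹ ≠ f)
    (m1 : g * h ∈ T) (m3 : g⁻¹ * f ∈ T)
    (m5 : h⁻¹ * f ∈ T) (m7 : (g * h)⁻¹ * f ∈ T) :
    (g * h * g⁻¹ = h ∨ g * h * g⁻¹ = h⁻¹) ∧
      ((φ (g * h) = (g * h)⁻¹ ∧ (g * h)⁻¹ ≠ g * h) →
        Nonempty (↥(Subgroup.closure ({g, h} : Set G)) ≃* QuaternionGroup 2)) ∧
      (φ (g * h) = g * h → g * h = h * g) := by
  by_cases hA : φ (g * h) = g * h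
  · have hcomm : g * h = h * g := commute_of_conj_eq_inv
      (hφ.conj_eq_inv_of_map_eq_self hgT hgA hfT hfB hfB' m3)
      (hφ.conj_eq_inv_of_map_eq_self hhT hhA hfT hfB hfB' m5)
      (hφ.conj_eq_inv_of_map_eq_self (Set.mem_insert_of_mem 1 m1) hA hfT hfB hfB' m7)
    exact ⟨Or.inl (by rw [hcomm, mul_inv_cancel_right]),
      fun hB => (hB.2 (hB.1.symm.trans hA)).elim, fun _ => hcomm⟩
  · have hinv := hφ.mul_inv_eq_of_map_mul_ne hgT hgA hhT m1 hA
    have hconj := hφ.conj_eq_inv_of_map_mul_ne hsym hgT hgA hhT hhA m1 hA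
    exact ⟨Or.inr hconj, fun hB => nonempty_closure_mulEquiv_quaternionGroup_two hinv hconj hB.2,
      fun hA' => (hA hA').elim⟩

/-- **Lemma.** Let `T` be a symmetric generating set of `G` with `1 ∉ T` and
`φ ∈ 𝓑(G,T)`, `g, h ∈ A` (fixed by `φ`), `f ∈ B` (inverted by `φ`), with the seven
elements `g*h, f*g, g⁻¹*f, f*h, h⁻¹*f, f*g*h, (g*h)⁻¹*f` all in `T`. Then
`g*h*g⁻¹ ∈ {h, h⁻¹}`; more precisely if `g*h ∈ B` then `⟨g,h⟩ ≅ Q₈`, while if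
`g*h ∈ A` then `g` and `h` commute. -/
theorem abelian_lemma {G : Type u} [Group G] (T : Set G) (hsym : T⁻¹ = T)
    (h1T : (1 : G) ∉ T) (hgen : Subgroup.closure T = ⊤)
    (φ : G → G) (hφ : MemBallPermGroup T φ)
    (g h f : G)
    (hgT : g ∈ insert (1 : G) T) (hgA : φ g = g)
    (hhT : h ∈ insert (1 : G) T) (hhA : φ h = h)
    (hfT : f ∈ T) (hfB : φ f = f⁻¹) (hfB' : f⁻¹ ≠ f)
    (m1 : g * h ∈ T) (m2 : f * g ∈ T) (m3 : g⁻¹ * f ∈ T) (m4 : f * h ∈ T)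
    (m5 : h⁻¹ * f ∈ T) (m6 : f * g * h ∈ T) (m7 : (g * h)⁻¹ * f ∈ T) :
    (g * h * g⁻¹ = h ∨ g * h * g⁻¹ = h⁻¹) ∧
      ((φ (g * h) = (g * h)⁻¹ ∧ (g * h)⁻¹ ≠ g * h) →
        Nonempty (↥(Subgroup.closure ({g, h} : Set G)) ≃* QuaternionGroup 2)) ∧
      (φ (g * h) = g * h → g * h = h * g) :=
  abelian_lemma_general T hsym φ hφ g h f hgT hgA hhT hhA hfT hfB hfB' m1 m3 m5 m7
end
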